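/- arXiv:0910.4518 — 13 statements merged into one kernel-verified Lean document; each statement's English description precedes it below -/
import Mathlib

section
/- Let n be a natural number, J a finite index set, and for each j ∈ J let R_j ⊆ (Fin r_j → Bool) be a mergeable Boolean relation and f_j : Fin r_j → Fin n a map of positions. Then the relation R := {t : Fin n → Bool | ∀ j ∈ J, t ∘ f_j ∈ R_j} is mergeable (where mergeability of a set of tuples Fin n → Bool is defined exactly as for relations of arity n). In particular, any relation implementable as a conjunction of constraints over mergeable relations is mergeable. -/
/-- The merge operation applies to tuples `α β γ δ` if `α ∧ δ ≤ β ≤ α` and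
`β ∧ γ ≤ δ ≤ γ` (pointwise, on Boolean tuples). -/
def MergeApplies {r : ℕ} (α β γ δ : Fin r → Bool) : Prop :=
  (∀ i, (α i && δ i) ≤ β i) ∧ (∀ i, β i ≤ α i) ∧
    (∀ i, (β i && γ i) ≤ δ i) ∧ (∀ i, δ i ≤ γ i)

/-- A Boolean relation is mergeable if it is closed under the merge operation. -/
def Mergeable {r : ℕ} (R : Set (Fin r → Bool)) : Prop :=
  ∀ α ∈ R, ∀ β ∈ R, ∀ γ ∈ R, ∀ δ ∈ R,
    MergeApplies α β γ δ → (fun i => α i && (β i || γ i)) ∈ R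

theorem MergeApplies.comp {r s : ℕ} {α β γ δ : Fin r → Bool} (h : MergeApplies α β γ δ)
    (g : Fin s → Fin r) : MergeApplies (α ∘ g) (β ∘ g) (γ ∘ g) (δ ∘ g) :=
  ⟨fun i => h.1 (g i), fun i => h.2.1 (g i), fun i => h.2.2.1 (g i), fun i => h.2.2.2 (g i)⟩

theorem Mergeable.preimage_comp {r s : ℕ} {R : Set (Fin r → Bool)} (hR : Mergeable R)
    (g : Fin r → Fin s) : Mergeable {t : Fin s → Bool | t ∘ g ∈ R} :=
  fun _ hα _ hβ _ hγ _ hδ h => hR _ hα _ hβ _ hγ _ hδ (h.comp g)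

theorem Mergeable.iInter {r : ℕ} {ι : Sort*} {R : ι → Set (Fin r → Bool)}
    (hR : ∀ i, Mergeable (R i)) : Mergeable (⋂ i, R i) := by
  intro α hα β hβ γ hγ δ hδ h
  simp only [Set.mem_iInter] at *
  exact fun i => hR i _ (hα i) _ (hβ i) _ (hγ i) _ (hδ i) h

theorem stmt_2 {n : ℕ} {J : Type*} (Js : Finset J) (r : J → ℕ)
    (Rj : ∀ j : J, Set (Fin (r j) → Bool)) (f : ∀ j : J, Fin (r j) → Fin n)
    (hmerge : ∀ j ∈ Js, Mergeable (Rj j)) :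
    Mergeable {t : Fin n → Bool | ∀ j ∈ Js, (t ∘ f j) ∈ Rj j} := by
  have h : Mergeable (⋂ j ∈ Js, {t : Fin n → Bool | t ∘ f j ∈ Rj j}) :=
    Mergeable.iInter fun j => Mergeable.iInter fun hj =>
      Mergeable.preimage_comp (hmerge j hj) (f j)
  simpa only [← Set.ofPred_forall] using h
end

section
/- Let R ⊆ (Fin r → Bool) be a zero-valid mergeable Boolean relation. Then R is closed under pointwise intersection: for all α, β ∈ R, the tuple α ∧ β belongs to R. -/
theorem mergeApplies_false_false {r : ℕ} (α γ : Fin r → Bool) :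
    MergeApplies α (fun _ => false) γ (fun _ => false) :=
  ⟨fun _ => by simp, fun _ => Bool.false_le _, fun _ => by simp, fun _ => Bool.false_le _⟩

theorem stmt_4 {r : ℕ} (R : Set (Fin r → Bool))
    (hzero : (fun _ => false : Fin r → Bool) ∈ R) (hR : Mergeable R) :
    ∀ α ∈ R, ∀ β ∈ R, (fun i => α i && β i) ∈ R := by
  intro α hα β hβ
  simpa using hR α hα _ hzero β hβ _ hzero (mergeApplies_false_false α β)
end

section
/- Let R ⊆ (Fin r → Bool) be a zero-valid mergeable Boolean relation. Then for all tuples α, β, γ ∈ R, the tuple α ∧ (β ∨ γ) belongs to R (i.e., R is IHSB-). -/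
theorem mergeApplies_and_and {r : ℕ} (α β γ : Fin r → Bool) :
    MergeApplies α (fun i => α i && β i) γ (fun i => α i && β i && γ i) := by
  refine ⟨fun i => ?_, fun i => ?_, fun i => ?_, fun i => ?_⟩ <;> dsimp only <;>
    cases α i <;> cases β i <;> cases γ i <;> decide

theorem Mergeable.and_mem {r : ℕ} {R : Set (Fin r → Bool)} (hR : Mergeable R)
    (hzero : (fun _ => false : Fin r → Bool) ∈ R) {α β : Fin r → Bool} (hα : α ∈ R)
    (hβ : β ∈ R) : (fun i => α i && β i) ∈ R := by
  simpa using hR α hα _ hzero β hβ _ hzero (mergeApplies_false_false α β)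

theorem stmt_5 {r : ℕ} (R : Set (Fin r → Bool))
    (hzero : (fun _ => false : Fin r → Bool) ∈ R) (hR : Mergeable R) :
    ∀ α ∈ R, ∀ β ∈ R, ∀ γ ∈ R, (fun i => α i && (β i || γ i)) ∈ R := by
  intro α hα β hβ γ hγ
  have hαβ := hR.and_mem hzero hα hβ
  have hαβγ := hR.and_mem hzero hαβ hγ
  convert hR α hα _ hαβ γ hγ _ hαβγ (mergeApplies_and_and α β γ) using 2 with i
  cases α i <;> cases β i <;> cases γ i <;> rfl
end

section
/- Let R ⊆ (Fin r → Bool) be a zero-valid mergeable Boolean relation. Then R can be implemented using only implications and negative clauses: a tuple t : Fin r → Bool belongs to R if and only if (i) for every pair of positions (i, j) such that the implication (i, j) is valid on R, one has t i ≤ t j, and (ii) for every negative clause N ⊆ Fin r valid on R, there is some i ∈ N with t i = false. -/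
theorem stmt_6 {r : ℕ} (R : Set (Fin r → Bool))
    (hzero : (fun _ => false : Fin r → Bool) ∈ R) (hR : Mergeable R) :
    ∀ t : Fin r → Bool,
      t ∈ R ↔
        ((∀ i j : Fin r, (∀ s ∈ R, s i ≤ s j) → t i ≤ t j) ∧
         (∀ N : Set (Fin r), N.Nonempty →
            (∀ s ∈ R, ∃ i ∈ N, s i = false) → ∃ i ∈ N, t i = false)) := by
  -- closure under meet
  have meet : ∀ a ∈ R, ∀ b ∈ R, (fun i => a i && b i) ∈ R := by
    intro a ha b hb
    have h := hR a ha (fun _ => false) hzero b hb (fun _ => false) hzero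
      ⟨by intro i; simp, by intro i; simp, by intro i; simp, by intro i; simp⟩
    simpa using h
  -- closure under join below a common element
  have join : ∀ m ∈ R, ∀ a ∈ R, ∀ b ∈ R, (∀ i, a i ≤ m i) → (∀ i, b i ≤ m i) →
      (fun i => a i || b i) ∈ R := by
    intro m hm a ha b hb ham hbm
    have h := hR m hm a ha b hb (fun i => a i && b i) (meet a ha b hb)
      ⟨by intro i; show (m i && (a i && b i)) ≤ a i;
          cases m i <;> cases a i <;> cases b i <;> decide,
       by intro i; exact ham i,
       by intro i; show (a i && b i) ≤ (a i && b i); exact le_refl _,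
       by intro i; show (a i && b i) ≤ b i; cases a i <;> cases b i <;> decide⟩
    have he : (fun i => m i && (a i || b i)) = (fun i => a i || b i) := by
      funext i
      have h1 := ham i; have h2 := hbm i
      revert h1 h2
      cases a i <;> cases b i <;> cases m i <;> decide
    rwa [he] at h
  intro t
  constructor
  · intro ht
    exact ⟨fun i j h => h t ht, fun N _ hval => hval t ht⟩
  · rintro ⟨h1, h2⟩
    by_cases hT : ∀ i, t i = false
    · have : t = (fun _ => false) := funext hT
      rw [this]; exact hzero
    · push_neg at hT
      obtain ⟨i0, hi0⟩ := hT
      have hi0' : t i0 = true := by cases h : t i0 <;> simp_all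
      -- obtain m ∈ R true on all of T
      have hm : ∃ m ∈ R, ∀ i, t i = true → m i = true := by
        by_contra hc
        push_neg at hc
        obtain ⟨i, hi, hfi⟩ := h2 {i | t i = true} ⟨i0, hi0'⟩ (by
          intro s hs
          obtain ⟨i, hti, hsi⟩ := hc s hs
          exact ⟨i, hti, by cases h : s i <;> simp_all⟩)
        simp only [Set.mem_setOf_eq] at hi
        rw [hi] at hfi; exact Bool.true_eq_false.mp hfi |>.elim
      obtain ⟨m, hmR, hmT⟩ := hm
      -- implication witnesses, meeted with m
      have key : ∀ i j : Fin r, ∃ s, s ∈ R ∧ (∀ k, s k ≤ m k) ∧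
          (t i = true → t j = false → (s i = true ∧ s j = false)) := by
        intro i j
        by_cases hij : t i = true ∧ t j = false
        · obtain ⟨hti, htj⟩ := hij
          have hs : ∃ s ∈ R, s i = true ∧ s j = false := by
            by_contra hc; push_neg at hc
            have hall : ∀ s ∈ R, s i ≤ s j := by
              intro s hs
              cases hsi : s i
              · simp
              · cases hsj : s j
                · exact absurd hsj (hc s hs hsi)
                · simp
            have := h1 i j hall
            rw [hti, htj] at this
            exact absurd this (by decide)
          obtain ⟨s, hsR, hsi, hsj⟩ := hs
          refine ⟨fun k => s k && m k, meet s hsR m hmR,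
            fun k => by show (s k && m k) ≤ m k; cases s k <;> cases m k <;> decide, ?_⟩
          intro _ _
          constructor
          · show (s i && m i) = true
            rw [hsi, hmT i hti]
            rfl
          · show (s j && m j) = false
            rw [hsj]
            rfl
        · exact ⟨fun _ => false, hzero, fun k => by simp, fun h1 h2 => absurd ⟨h1, h2⟩ hij⟩
      choose x hx1 hx2 hx3 using key
      -- the finsets
      set T : Finset (Fin r) := Finset.univ.filter (fun i => t i = true) with hTdef
      set U : Finset (Fin r) := Finset.univ.filter (fun i => t i = false) with hUdef
      -- y j : join over i ∈ T of x i j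
      set y : Fin r → (Fin r → Bool) := fun j => T.sup (fun i => x i j) with hydef
      -- sup closure
      have supmem : ∀ (s : Finset (Fin r)) (g : Fin r → (Fin r → Bool)),
          (∀ i ∈ s, g i ∈ R ∧ ∀ k, g i k ≤ m k) →
          s.sup g ∈ R ∧ ∀ k, (s.sup g) k ≤ m k := by
        intro s
        induction s using Finset.induction_on with
        | empty =>
          intro g _
          constructor
          · have : (∅ : Finset (Fin r)).sup g = (fun _ => false) := by
              funext k; simp [Finset.sup_apply]
            rw [this]; exact hzero
          · intro k; simp [Finset.sup_apply]
        | @insert a s' ha ih =>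
          intro g hg
          obtain ⟨hR1, hle1⟩ := hg a (Finset.mem_insert_self a s')
          obtain ⟨hR2, hle2⟩ := ih g (fun i hi => hg i (Finset.mem_insert_of_mem hi))
          have heq : (insert a s').sup g = (fun k => g a k || (s'.sup g) k) := by
            funext k
            simp [Finset.sup_insert, Finset.sup_apply, Pi.sup_apply]
          rw [heq]
          constructor
          · exact join m hmR (g a) hR1 (s'.sup g) hR2 hle1 hle2
          · intro k
            have h1 := hle1 k; have h2 := hle2 k
            cases hga : g a k <;> cases hs : (s'.sup g) k <;> simp_all
      -- inf closure (meeted with m)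
      have infmem : ∀ (s : Finset (Fin r)) (g : Fin r → (Fin r → Bool)),
          (∀ j ∈ s, g j ∈ R) → (fun k => m k && (s.inf g) k) ∈ R := by
        intro s
        induction s using Finset.induction_on with
        | empty =>
          intro g _
          have : (fun k => m k && ((∅ : Finset (Fin r)).inf g) k) = m := by
            funext k; simp [Finset.inf_apply]
          rw [this]; exact hmR
        | @insert a s' ha ih =>
          intro g hg
          have hIH := ih g (fun j hj => hg j (Finset.mem_insert_of_mem hj))
          have hga := hg a (Finset.mem_insert_self a s')
          have := meet (g a) hga _ hIH
          have heq : (fun k => g a k && (m k && (s'.inf g) k)) =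
              (fun k => m k && ((insert a s').inf g) k) := by
            funext k
            simp only [Finset.inf_insert, Pi.inf_apply]
            cases g a k <;> cases m k <;> cases (s'.inf g) k <;> decide
          rwa [heq] at this
      -- properties of y
      have hyR : ∀ j, y j ∈ R ∧ ∀ k, y j k ≤ m k := by
        intro j
        exact supmem T (fun i => x i j) (fun i _ => ⟨hx1 i j, hx2 i j⟩)
      -- final element
      have hfin := infmem U y (fun j _ => (hyR j).1)
      have hteq : (fun k => m k && (U.inf y) k) = t := by
        funext k
        cases htk : t k
        · -- k ∈ U; y k k = false, so inf ≤ false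
          have hkU : k ∈ U := by simp [hUdef, htk]
          have hyk : y k k = false := by
            have : (T.sup (fun i => x i k)) k = T.sup (fun i => x i k k) := by
              simp [Finset.sup_apply]
            rw [hydef]
            simp only [this]
            rw [show (false : Bool) = ⊥ from rfl, Finset.sup_eq_bot_iff]
            intro i hi
            have hti : t i = true := by simpa [hTdef] using hi
            exact (hx3 i k hti htk).2
          have hle : (U.inf y) k ≤ y k k := by
            have := Finset.inf_le (f := y) hkU
            exact this k
          rw [hyk] at hle
          have : (U.inf y) k = false := by
            cases h : (U.inf y) k
            · rfl
            · rw [h] at hle; exact absurd hle (by simp)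
          rw [this]; simp
        · -- t k = true: m k = true and all y j k = true
          have hmk : m k = true := hmT k htk
          have hkT : k ∈ T := by simp [hTdef, htk]
          have hinf : (U.inf y) k = true := by
            have : (U.inf y) k = U.inf (fun j => y j k) := by
              simp [Finset.inf_apply]
            rw [this]
            rw [show (true : Bool) = ⊤ from rfl, Finset.inf_eq_top_iff]
            intro j hj
            have htj : t j = false := by simpa [hUdef] using hj
            have hx : x k j k = true := (hx3 k j htk htj).1
            have hle : x k j ≤ y j := by
              simp only [hydef]
              exact Finset.le_sup (f := fun i => x i j) hkT
            have := hle k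
            rw [hx] at this
            cases h : y j k
            · rw [h] at this; exact absurd this (by simp)
            · rfl
          rw [hmk, hinf]; simp
      rwa [hteq] at hfin
end

section
/- Let R ⊆ (Fin r → Bool) be a mergeable Boolean relation, let C ⊆ Fin r and let P be the complement of C in Fin r. Then ∇_C(R) = {σ ∈ Δ_P(∇_C(R)) | σ i ≤ σ j for all i, j ∈ P such that the implication (i, j) is valid on ∇_C(R)}; that is, the sunflower restriction ∇_C(R) is implemented by its zero-closure on the petal positions together with all implications between petal positions that are valid on ∇_C(R). -/
/-- Sunflower restriction of `R` with core `C`: tuples of `R` that remain in `R`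
when all positions outside `C` are set to false. -/
def nablaC {r : ℕ} (C : Finset (Fin r)) (R : Set (Fin r → Bool)) :
    Set (Fin r → Bool) :=
  {t | t ∈ R ∧ (fun i => if i ∈ C then t i else false) ∈ R}

/-- Zero-closure of `S` on positions `P`. -/
def deltaP {r : ℕ} (P : Finset (Fin r)) (S : Set (Fin r → Bool)) :
    Set (Fin r → Bool) :=
  {t | ∃ s ∈ S, (∀ i ∉ P, t i = s i) ∧ ∀ i ∈ P, t i ≤ s i}

namespace Stmt8Aux

variable {r : ℕ} {C : Finset (Fin r)} {R : Set (Fin r → Bool)}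

lemma restrict_mem {s : Fin r → Bool} (hs : s ∈ nablaC C R) :
    (fun i => if i ∈ C then s i else false) ∈ nablaC C R := by
  refine ⟨hs.2, ?_⟩
  convert hs.2 using 1
  funext i; by_cases h : i ∈ C <;> simp [h]

lemma meet_mem (hR : Mergeable R) {s t : Fin r → Bool}
    (hs : s ∈ nablaC C R) (ht : t ∈ nablaC C R) :
    (fun i => if i ∈ C then s i else s i && t i) ∈ nablaC C R := by
  have hmerge := hR s hs.1 (fun i => if i ∈ C then s i else false) hs.2
      t ht.1 (fun i => if i ∈ C then t i else false) ht.2 ?_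
  · constructor
    · convert hmerge using 1
      funext i; by_cases h : i ∈ C <;> cases hsi : s i <;> simp [h, hsi]
    · have : (fun i => if i ∈ C then (if i ∈ C then s i else s i && t i) else false)
          = (fun i => if i ∈ C then s i else false) := by
        funext i; by_cases h : i ∈ C <;> simp [h]
      rw [this]; exact hs.2
  · refine ⟨fun i => ?_, fun i => ?_, fun i => ?_, fun i => ?_⟩ <;>
      by_cases h : i ∈ C <;> simp [h] <;> cases s i <;> cases t i <;> decide

lemma join_mem (hR : Mergeable R) {α x γ : Fin r → Bool}
    (hα : α ∈ nablaC C R) (hx : x ∈ nablaC C R) (hγ : γ ∈ nablaC C R) :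
    (fun i => if i ∈ C then α i else α i && (x i || γ i)) ∈ nablaC C R := by
  have hβ := meet_mem hR hα hx
  have hδ := meet_mem hR hγ hx
  have hmerge := hR α hα.1 _ hβ.1 γ hγ.1 _ hδ.1 ?_
  · constructor
    · convert hmerge using 1
      funext i; by_cases h : i ∈ C <;>
        cases α i <;> cases x i <;> cases γ i <;> simp [h]
    · have : (fun i => if i ∈ C then (if i ∈ C then α i else α i && (x i || γ i)) else false)
          = (fun i => if i ∈ C then α i else false) := by
        funext i; by_cases h : i ∈ C <;> simp [h]
      rw [this]; exact hα.2
  · refine ⟨fun i => ?_, fun i => ?_, fun i => ?_, fun i => ?_⟩ <;>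
      by_cases h : i ∈ C <;> simp only [h, if_pos, if_neg, not_false_iff] <;>
      cases α i <;> cases x i <;> cases γ i <;> decide

lemma exists_witness (hR : Mergeable R) {s : Fin r → Bool} (hs : s ∈ nablaC C R)
    {i : Fin r} (hi : i ∉ C)
    (T : Finset (Fin r)) (hTs : ∀ j ∈ T, s j = true)
    (hT : ∀ j ∈ T, ∃ t ∈ nablaC C R, t j = true ∧ t i = false) :
    ∃ w ∈ nablaC C R, (∀ c ∈ C, w c = s c) ∧ (∀ p, p ∉ C → w p ≤ s p) ∧
      w i = false ∧ ∀ j ∈ T, w j = true := by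
  induction T using Finset.induction_on with
  | empty =>
    exact ⟨_, restrict_mem hs, fun c hc => by simp [hc],
      fun p hp => by simp [hp], by simp [hi], by simp⟩
  | @insert j T hjT ih =>
    obtain ⟨w, hwN, hwC, hwle, hwi, hwT⟩ := ih
      (fun k hk => hTs k (Finset.mem_insert_of_mem hk))
      (fun k hk => hT k (Finset.mem_insert_of_mem hk))
    obtain ⟨t, htN, htj, hti⟩ := hT j (Finset.mem_insert_self j T)
    refine ⟨_, join_mem hR hs hwN htN, fun c hc => by simp [hc],
      fun p hp => by simp only [if_neg hp]; cases s p <;> simp,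
      by simp [hi, hwi, hti], ?_⟩
    intro k hk
    rcases Finset.mem_insert.1 hk with rfl | hk
    · by_cases h : k ∈ C <;> simp [h, hTs k (Finset.mem_insert_self k T), htj]
    · by_cases h : k ∈ C <;>
        simp [h, hTs k (Finset.mem_insert_of_mem hk), hwT k hk]

lemma descend (hR : Mergeable R) (σ : Fin r → Bool)
    (hσ : ∀ i ∉ C, ∀ j ∉ C, (∀ t ∈ nablaC C R, t i ≤ t j) → σ i ≤ σ j) :
    ∀ n : ℕ, ∀ s ∈ nablaC C R, (∀ c ∈ C, σ c = s c) → (∀ p, p ∉ C → σ p ≤ s p) →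
      (Finset.univ.filter (fun p => σ p ≠ s p)).card ≤ n → σ ∈ nablaC C R := by
  intro n
  induction n with
  | zero =>
    intro s hs hC _ hcard
    have : σ = s := by
      funext p
      by_contra hp
      have : p ∈ Finset.univ.filter (fun p => σ p ≠ s p) := by
        simp [hp]
      simp [Finset.card_eq_zero.1 (Nat.le_zero.1 hcard)] at this
    exact this ▸ hs
  | succ n ih =>
    intro s hs hC hle hcard
    by_cases hσs : σ = s
    · exact hσs ▸ hs
    · have ⟨i, hi⟩ : ∃ i, σ i ≠ s i := by
        by_contra h
        push_neg at h
        exact hσs (funext h)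
      have hiC : i ∉ C := fun h => hi (hC i h)
      have hσi : σ i = false := by
        cases hσif : σ i
        · rfl
        · exfalso
          have := hle i hiC
          rw [hσif] at this
          cases hsi : s i
          · rw [hsi] at this; exact absurd this (by decide)
          · exact hi (by rw [hσif, hsi])
      have hsi : s i = true := by
        cases hsif : s i
        · exact absurd (hσi.trans hsif.symm) hi
        · rfl
      set T := Finset.univ.filter (fun j => j ∉ C ∧ σ j = true) with hTdef
      have hTs : ∀ j ∈ T, s j = true := by
        intro j hj
        simp only [hTdef, Finset.mem_filter] at hj
        have := hle j hj.2.1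
        rw [hj.2.2] at this
        cases hsj : s j
        · rw [hsj] at this; exact absurd this (by decide)
        · rfl
      have hT : ∀ j ∈ T, ∃ t ∈ nablaC C R, t j = true ∧ t i = false := by
        intro j hj
        simp only [hTdef, Finset.mem_filter] at hj
        by_contra h
        push_neg at h
        have hvalid : ∀ t ∈ nablaC C R, t j ≤ t i := by
          intro t ht
          cases htj : t j
          · exact Bool.false_le _
          · cases hti : t i
            · exact absurd hti (h t ht htj)
            · exact le_refl _
        have := hσ j hj.2.1 i hiC hvalid
        rw [hj.2.2, hσi] at this
        exact absurd this (by decide)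
      obtain ⟨w, hwN, hwC, hwle, hwi, hwT⟩ := exists_witness hR hs hiC T hTs hT
      refine ih w hwN (fun c hc => (hC c hc).trans (hwC c hc).symm) ?_ ?_
      · intro p hp
        cases hσp : σ p
        · exact Bool.false_le _
        · have : p ∈ T := by simp [hTdef, hp, hσp]
          rw [hwT p this]
      · have hsub : Finset.univ.filter (fun p => σ p ≠ w p) ⊆
            (Finset.univ.filter (fun p => σ p ≠ s p)).erase i := by
          intro p hp
          simp only [Finset.mem_filter, Finset.mem_univ, true_and] at hp
          have hpC : p ∉ C := fun h => hp ((hC p h).trans (hwC p h).symm)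
          have hσp : σ p = false := by
            cases hσpf : σ p
            · rfl
            · exfalso
              have : p ∈ T := by simp [hTdef, hpC, hσpf]
              exact hp (hσpf.trans (hwT p this).symm)
          have hwp : w p = true := by
            cases hwpf : w p
            · exact absurd (hσp.trans hwpf.symm) hp
            · rfl
          have hsp : s p = true := by
            have := hwle p hpC
            rw [hwp] at this
            cases hspf : s p
            · rw [hspf] at this; exact absurd this (by decide)
            · rfl
          refine Finset.mem_erase.2 ⟨?_, by simp [hσp, hsp]⟩
          intro h
          rw [h, hwi] at hwp
          simp at hwp
        have hmem : i ∈ Finset.univ.filter (fun p => σ p ≠ s p) := by simp [hi]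
        calc (Finset.univ.filter (fun p => σ p ≠ w p)).card
            ≤ ((Finset.univ.filter (fun p => σ p ≠ s p)).erase i).card :=
              Finset.card_le_card hsub
          _ = (Finset.univ.filter (fun p => σ p ≠ s p)).card - 1 :=
              Finset.card_erase_of_mem hmem
          _ ≤ n := by omega

end Stmt8Aux


theorem stmt_8 {r : ℕ} (R : Set (Fin r → Bool)) (hR : Mergeable R)
    (C : Finset (Fin r)) :
    nablaC C R =
      {σ ∈ deltaP Cᶜ (nablaC C R) |
        ∀ i ∈ Cᶜ, ∀ j ∈ Cᶜ, (∀ t ∈ nablaC C R, t i ≤ t j) → σ i ≤ σ j} := by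
  ext σ
  constructor
  · intro hσ
    refine ⟨⟨σ, hσ, fun i _ => rfl, fun i _ => le_refl _⟩, ?_⟩
    intro i _ j _ hvalid
    exact hvalid σ hσ
  · rintro ⟨⟨s, hsN, heq, hle⟩, himp⟩
    have hC : ∀ c ∈ C, σ c = s c := fun c hc =>
      heq c (by simp [Finset.mem_compl, hc])
    have hle' : ∀ p, p ∉ C → σ p ≤ s p := fun p hp =>
      hle p (Finset.mem_compl.2 hp)
    have hσ' : ∀ i ∉ C, ∀ j ∉ C, (∀ t ∈ nablaC C R, t i ≤ t j) → σ i ≤ σ j :=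
      fun i hi j hj h => himp i (Finset.mem_compl.2 hi) j (Finset.mem_compl.2 hj) h
    exact Stmt8Aux.descend hR σ hσ'
      (Finset.univ.filter (fun p => σ p ≠ s p)).card s hsN hC hle' (le_refl _)
end

section
/- Let R ⊆ (Fin r → Bool) be a mergeable Boolean relation, let C ⊆ Fin r and let P be the complement of C in Fin r. Then the zero-closure on the petal positions of the sunflower restriction, Δ_P(∇_C(R)), is mergeable. -/
/-!
Witnesses `a, b, c, d ∈ ∇_C(R)` for `α, β, γ, δ` satisfy the merge conditions only on the
core `C`. Nevertheless `a ⊓ (b ⊔ c) ∈ R`, by three merges that use the core restrictions of `b`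
and `d` in place of `b` and `d`; and the core restriction of `a ⊓ (b ⊔ c)` is the merge of the
core restrictions of `a, b, c, d`. So `a ⊓ (b ⊔ c) ∈ ∇_C(R)` witnesses `α ⊓ (β ⊔ γ)`.
-/

theorem inf_sup_inf_eq_inf_inf_sup_inf {L : Type*} [DistribLattice L] (a b c χ : L) :
    a ⊓ (b ⊔ c) ⊓ χ = a ⊓ χ ⊓ (b ⊓ χ ⊔ c ⊓ χ) := by
  rw [← inf_sup_right, inf_inf_distrib_right]

section

variable {r : ℕ}

theorem mergeApplies_iff {α β γ δ : Fin r → Bool} :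
    MergeApplies α β γ δ ↔ α ⊓ δ ≤ β ∧ β ≤ α ∧ β ⊓ γ ≤ δ ∧ δ ≤ γ :=
  Iff.rfl

theorem MergeApplies.inf_right {α β γ δ : Fin r → Bool} (h : MergeApplies α β γ δ)
    (χ : Fin r → Bool) : MergeApplies (α ⊓ χ) (β ⊓ χ) (γ ⊓ χ) (δ ⊓ χ) := by
  obtain ⟨hαδ, hβα, hβγ, hδγ⟩ := mergeApplies_iff.mp h
  refine mergeApplies_iff.mpr ⟨?_, inf_le_inf_right χ hβα, ?_, inf_le_inf_right χ hδγ⟩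
  · rw [← inf_inf_distrib_right]; exact inf_le_inf_right χ hαδ
  · rw [← inf_inf_distrib_right]; exact inf_le_inf_right χ hβγ

theorem Mergeable.inf_sup_mem {R : Set (Fin r → Bool)} (hR : Mergeable R)
    {α β γ δ : Fin r → Bool} (hα : α ∈ R) (hβ : β ∈ R) (hγ : γ ∈ R) (hδ : δ ∈ R)
    (h : MergeApplies α β γ δ) : α ⊓ (β ⊔ γ) ∈ R :=
  hR α hα β hβ γ hγ δ hδ h

-- Three merges produce `a ⊓ b`, then `c ⊓ (d₀ ⊔ a ⊓ b)`, then `a ⊓ (b ⊔ c)`.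
theorem Mergeable.inf_sup_mem_of_mergeApplies {R : Set (Fin r → Bool)} (hR : Mergeable R)
    {a b c b₀ d₀ : Fin r → Bool} (ha : a ∈ R) (hb : b ∈ R) (hc : c ∈ R)
    (hb₀ : b₀ ∈ R) (hd₀ : d₀ ∈ R) (h : MergeApplies a b₀ c d₀) (hb₀b : b₀ ≤ b)
    (hd₀b : d₀ ⊓ b ≤ b₀) : a ⊓ (b ⊔ c) ∈ R := by
  obtain ⟨had₀, hb₀a, hb₀c, hd₀c⟩ := mergeApplies_iff.mp h
  have hab : a ⊓ b ∈ R := by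
    have := hR.inf_sup_mem ha hb₀ hb hb₀ <| mergeApplies_iff.mpr
      ⟨inf_le_right, hb₀a, inf_le_left, hb₀b⟩
    rwa [sup_eq_right.mpr hb₀b] at this
  have hm : c ⊓ (d₀ ⊔ a ⊓ b) ∈ R := hR.inf_sup_mem hc hd₀ hab hb₀ <| mergeApplies_iff.mpr
    ⟨by rw [inf_comm]; exact hb₀c, hd₀c,
      le_trans (inf_le_inf_left d₀ inf_le_right) hd₀b, le_inf hb₀a hb₀b⟩
  have := hR.inf_sup_mem ha hab hc hm <| mergeApplies_iff.mpr
    ⟨?_, inf_le_left, le_inf inf_le_right (le_sup_of_le_right inf_le_left), inf_le_left⟩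
  · rwa [inf_sup_left a (a ⊓ b), inf_left_idem, ← inf_sup_left] at this
  · refine le_inf inf_le_left ?_
    calc a ⊓ (c ⊓ (d₀ ⊔ a ⊓ b)) ≤ a ⊓ (d₀ ⊔ a ⊓ b) := inf_le_inf_left a inf_le_right
      _ = a ⊓ d₀ ⊔ a ⊓ b := by rw [inf_sup_left, inf_left_idem]
      _ ≤ b := sup_le (had₀.trans hb₀b) inf_le_right

def Finset.boolIndicator (C : Finset (Fin r)) : Fin r → Bool := fun i => decide (i ∈ C)

theorem mem_nablaC_iff {C : Finset (Fin r)} {R : Set (Fin r → Bool)} {t : Fin r → Bool} :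
    t ∈ nablaC C R ↔ t ∈ R ∧ t ⊓ C.boolIndicator ∈ R := by
  have : (fun i => if i ∈ C then t i else false) = t ⊓ C.boolIndicator := by
    funext i
    by_cases hi : i ∈ C <;> simp [hi, Finset.boolIndicator]
  rw [nablaC, Set.mem_ofPred_eq, this]

theorem mem_deltaP_compl_iff {C : Finset (Fin r)} {S : Set (Fin r → Bool)} {t : Fin r → Bool} :
    t ∈ deltaP Cᶜ S ↔ ∃ s ∈ S, t ≤ s ∧ t ⊓ C.boolIndicator = s ⊓ C.boolIndicator := by
  simp only [deltaP, Set.mem_ofPred_eq, Finset.mem_compl, not_not, Pi.le_def, funext_iff,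
    Pi.inf_apply, Finset.boolIndicator]
  refine exists_congr fun s => and_congr_right fun _ => ⟨?_, ?_⟩
  · rintro ⟨hC, hP⟩
    refine ⟨fun i => ?_, fun i => ?_⟩ <;> by_cases hi : i ∈ C <;> simp [hi, hC, hP]
  · rintro ⟨hle, heq⟩
    refine ⟨fun i hi => ?_, fun i _ => hle i⟩
    simpa [hi] using heq i

theorem Mergeable.inf_sup_mem_nablaC {R : Set (Fin r → Bool)} (hR : Mergeable R) {C : Finset (Fin r)}
    {a b c d : Fin r → Bool} (ha : a ∈ nablaC C R) (hb : b ∈ nablaC C R)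
    (hc : c ∈ nablaC C R) (hd : d ∈ nablaC C R)
    (h : MergeApplies (a ⊓ C.boolIndicator) (b ⊓ C.boolIndicator) (c ⊓ C.boolIndicator)
      (d ⊓ C.boolIndicator)) :
    a ⊓ (b ⊔ c) ∈ nablaC C R := by
  set χ := C.boolIndicator
  rw [mem_nablaC_iff] at ha hb hc hd ⊢
  obtain ⟨had, hba, hbc, hdc⟩ := mergeApplies_iff.mp h
  have h' : MergeApplies a (b ⊓ χ) c (d ⊓ χ) := by
    refine mergeApplies_iff.mpr ⟨?_, hba.trans inf_le_left, ?_, hdc.trans inf_le_left⟩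
    · rwa [← inf_assoc, inf_inf_distrib_right]
    · rwa [inf_right_comm, inf_inf_distrib_right]
  refine ⟨hR.inf_sup_mem_of_mergeApplies ha.1 hb.1 hc.1 hb.2 hd.2 h' inf_le_left
    (by rw [inf_right_comm]; exact inf_le_inf_right χ inf_le_right), ?_⟩
  rw [inf_sup_inf_eq_inf_inf_sup_inf]
  exact hR.inf_sup_mem ha.2 hb.2 hc.2 hd.2 h

end

theorem stmt_9 {r : ℕ} (R : Set (Fin r → Bool)) (hR : Mergeable R)
    (C : Finset (Fin r)) :
    Mergeable (deltaP Cᶜ (nablaC C R)) := by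
  intro α hα β hβ γ hγ δ hδ h
  show α ⊓ (β ⊔ γ) ∈ deltaP Cᶜ (nablaC C R)
  obtain ⟨a, ha, hαa, hα⟩ := mem_deltaP_compl_iff.mp hα
  obtain ⟨b, hb, hβb, hβ⟩ := mem_deltaP_compl_iff.mp hβ
  obtain ⟨c, hc, hγc, hγ⟩ := mem_deltaP_compl_iff.mp hγ
  obtain ⟨d, hd, -, hδ⟩ := mem_deltaP_compl_iff.mp hδ
  have hcore := h.inf_right C.boolIndicator
  rw [hα, hβ, hγ, hδ] at hcore
  refine mem_deltaP_compl_iff.mpr ⟨a ⊓ (b ⊔ c), hR.inf_sup_mem_nablaC ha hb hc hd hcore,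
    inf_le_inf hαa (sup_le_sup hβb hγc), ?_⟩
  rw [inf_sup_inf_eq_inf_inf_sup_inf, inf_sup_inf_eq_inf_inf_sup_inf, hα, hβ, hγ]
end

section
/- Sunflower replacement soundness: let R ⊆ (Fin (c+p) → Bool) be a Boolean relation whose first c positions are the core and last p positions the petals, let V be a type of variables, k ∈ ℕ, and let φ : V → Bool be an assignment under which at most k variables are true. Let x : Fin c → V and, for each a ∈ Fin (k+1), let y a : Fin p → V, such that for distinct a, b ∈ Fin (k+1) the ranges of y a and y b are disjoint. If for every a ∈ Fin (k+1) the tuple whose core coordinates are φ ∘ x and whose petal coordinates are φ ∘ (y a) belongs to R, then the tuple whose core coordinates are φ ∘ x and whose petal coordinates are all false belongs to R; consequently every one of these k+1 constraints also satisfies its sunflower restriction under φ. -/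
/-! If the all-false petal assignment were never realised, each of the `k + 1` petals would
contain a true variable; the petals being pairwise disjoint, these are `k + 1` distinct true
variables, contradicting the weight bound. So some petal is entirely false under `φ`, and the
constraint on that petal is literally the sunflower restriction. -/

theorem Set.exists_forall_notMem_of_ncard_lt {V ι κ : Type*} {S : Set V} (hS : S.Finite)
    {y : ι → κ → V} (hdisj : ∀ a b, a ≠ b → ∀ i j, y a i ≠ y b j)
    (hcard : S.ncard < Nat.card ι) :
    ∃ a, ∀ j, y a j ∉ S := by
  by_contra! hmeet
  choose f hf using hmeet
  have hinj : Function.Injective fun a => (⟨y a (f a), hf a⟩ : S) := by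
    intro a b hab
    by_contra hne
    exact hdisj a b hne (f a) (f b) (congrArg Subtype.val hab)
  have := hS.to_subtype
  have hle := Nat.card_le_card_of_injective _ hinj
  rw [Nat.card_coe_set_eq] at hle
  omega

theorem stmt_10 {c p : ℕ} (R : Set (Fin (c + p) → Bool)) {V : Type*} (k : ℕ)
    (φ : V → Bool) (hfin : {v : V | φ v = true}.Finite)
    (hweight : {v : V | φ v = true}.ncard ≤ k)
    (x : Fin c → V) (y : Fin (k + 1) → Fin p → V)
    (hdisj : ∀ a b : Fin (k + 1), a ≠ b → ∀ i j : Fin p, y a i ≠ y b j)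
    (hcon : ∀ a : Fin (k + 1),
      Fin.append (fun i => φ (x i)) (fun j => φ (y a j)) ∈ R) :
    Fin.append (fun i => φ (x i)) (fun _ => false) ∈ R ∧
    ∀ a : Fin (k + 1),
      Fin.append (fun i => φ (x i)) (fun j => φ (y a j)) ∈ R ∧
      Fin.append (fun i => φ (x i)) (fun _ => false) ∈ R := by
  obtain ⟨a, ha⟩ := Set.exists_forall_notMem_of_ncard_lt hfin hdisj
    (by rw [Nat.card_eq_fintype_card, Fintype.card_fin]; omega)
  have hpetal : (fun j => φ (y a j)) = fun _ => false :=
    funext fun j => by simpa using ha j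
  have hcore : Fin.append (fun i => φ (x i)) (fun _ => false) ∈ R := hpetal ▸ hcon a
  exact ⟨hcore, fun b => ⟨hcon b, hcore⟩⟩
end

section
/- Branching-tree lower bound (construction 2): let h ∈ ℕ and let R5 ⊆ (Bool × Bool × Bool × Bool × Bool) be a 5-ary Boolean relation with (true,false,true,false,false) ∉ R5 and (false,true,true,false,false) ∉ R5. Let l, r : ℕ → Bool satisfy l i ≠ r i for all i < h, and let x : ℕ → ℕ → Bool satisfy x 0 0 = true and (l i, r i, x i j, x (i+1) (2j), x (i+1) (2j+1)) ∈ R5 for all i < h and j < 2^i. Then for every i ≤ h there exists j < 2^i with x i j = true; in particular some leaf variable x h j is true. -/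
/-! By induction on the level, every level contains a true node: the two excluded tuples are
exactly the configurations with distinct selectors, a true parent and two false children, so a
true node always has a true child. -/

lemma child_true_of_mem {R5 : Set (Bool × Bool × Bool × Bool × Bool)}
    (h1 : (true, false, true, false, false) ∉ R5)
    (h2 : (false, true, true, false, false) ∉ R5)
    {a b c₀ c₁ : Bool} (hab : a ≠ b) (hmem : (a, b, true, c₀, c₁) ∈ R5) :
    c₀ = true ∨ c₁ = true := by
  revert hmem
  cases a <;> cases b <;> cases c₀ <;> cases c₁ <;> simp_all

lemma exists_level_true_of_child_true {h : ℕ} {x : ℕ → ℕ → Bool} (hx0 : x 0 0 = true)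
    (hchild : ∀ i < h, ∀ j < 2 ^ i, x i j = true →
      x (i + 1) (2 * j) = true ∨ x (i + 1) (2 * j + 1) = true) :
    ∀ i ≤ h, ∃ j < 2 ^ i, x i j = true := by
  intro i hi
  induction i with
  | zero => exact ⟨0, Nat.one_pos, hx0⟩
  | succ i ih =>
    obtain ⟨j, hj, hxj⟩ := ih (by omega)
    rcases hchild i (by omega) j hj hxj with hleft | hright
    · exact ⟨2 * j, by omega, hleft⟩
    · exact ⟨2 * j + 1, by omega, hright⟩

theorem stmt_13 (h : ℕ) (R5 : Set (Bool × Bool × Bool × Bool × Bool))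
    (h1 : (true, false, true, false, false) ∉ R5)
    (h2 : (false, true, true, false, false) ∉ R5)
    (l r : ℕ → Bool) (hlr : ∀ i < h, l i ≠ r i)
    (x : ℕ → ℕ → Bool) (hx0 : x 0 0 = true)
    (hstep : ∀ i < h, ∀ j < 2 ^ i,
      (l i, r i, x i j, x (i + 1) (2 * j), x (i + 1) (2 * j + 1)) ∈ R5) :
    ∀ i ≤ h, ∃ j < 2 ^ i, x i j = true :=
  exists_level_true_of_child_true hx0 fun i hi j hj hxj =>
    child_true_of_mem h1 h2 (hlr i hi) (hxj ▸ hstep i hi j hj)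
end

section
/- Branching-tree existence (construction 2): let h ∈ ℕ and let R5 ⊆ (Bool × Bool × Bool × Bool × Bool) be a 5-ary Boolean relation containing (true,false,true,true,false), (true,false,false,false,false), (false,true,true,false,true), and (false,true,false,false,false). Fix m < 2^h and define x i j = true iff j = m / 2^(h−i) (integer division), l i = true iff m / 2^(h−i−1) = 2·(m / 2^(h−i)) (the path to leaf m turns left at level i), and r i = ¬ l i. Then l i ≠ r i for all i < h; x 0 0 = true; for j < 2^h one has x h j = true iff j = m; and for all i < h and j < 2^i the tuple (l i, r i, x i j, x (i+1) (2j), x (i+1) (2j+1)) belongs to R5. -/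
/-!
The assignment marks the root-to-leaf path of leaf `m`: node `(i, j)` is on it iff `j` is the
`i`-bit prefix `m / 2 ^ (h - i)` of `m`, and `l i` records whether the next bit is `0`. Writing
`b` for the `(i + 1)`-bit prefix, the `i`-bit prefix is `b / 2`, so every internal node sees one of
the four tuples listed in the hypotheses, according to the parity of `b` and whether the node is on
the path.
-/

theorem Nat.div_two_pow_sub_eq_div_two_pow_sub_one_div_two (m : ℕ) {i h : ℕ} (hi : i < h) :
    m / 2 ^ (h - i) = m / 2 ^ (h - i - 1) / 2 := by
  rw [Nat.div_div_eq_div_mul, ← pow_succ, Nat.sub_one_add_one (Nat.sub_ne_zero_of_lt hi)]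

theorem branch_tuple_mem (R5 : Set (Bool × Bool × Bool × Bool × Bool))
    (h1 : (true, false, true, true, false) ∈ R5)
    (h2 : (true, false, false, false, false) ∈ R5)
    (h3 : (false, true, true, false, true) ∈ R5)
    (h4 : (false, true, false, false, false) ∈ R5) (b j : ℕ) :
    (decide (b = 2 * (b / 2)), !decide (b = 2 * (b / 2)),
      decide (j = b / 2), decide (2 * j = b), decide (2 * j + 1 = b)) ∈ R5 := by
  obtain ⟨a, rfl | rfl⟩ := Nat.even_or_odd' b <;> by_cases hj : j = a
  · convert h1 using 6 <;> simp <;> omega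
  · convert h2 using 6 <;> simp <;> omega
  · convert h3 using 6 <;> simp <;> omega
  · convert h4 using 6 <;> simp <;> omega

theorem stmt_14 (h : ℕ) (R5 : Set (Bool × Bool × Bool × Bool × Bool))
    (h1 : (true, false, true, true, false) ∈ R5)
    (h2 : (true, false, false, false, false) ∈ R5)
    (h3 : (false, true, true, false, true) ∈ R5)
    (h4 : (false, true, false, false, false) ∈ R5)
    (m : ℕ) (hm : m < 2 ^ h) :
    let x : ℕ → ℕ → Bool := fun i j => decide (j = m / 2 ^ (h - i))
    let l : ℕ → Bool := fun i => decide (m / 2 ^ (h - i - 1) = 2 * (m / 2 ^ (h - i)))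
    let r : ℕ → Bool := fun i => !(l i)
    (∀ i < h, l i ≠ r i) ∧
    x 0 0 = true ∧
    (∀ j < 2 ^ h, (x h j = true ↔ j = m)) ∧
    (∀ i < h, ∀ j < 2 ^ i,
      (l i, r i, x i j, x (i + 1) (2 * j), x (i + 1) (2 * j + 1)) ∈ R5) := by
  intro x l r
  refine ⟨fun i _ => by simp [r], by simp [x, Nat.div_eq_of_lt hm], fun j _ => by simp [x], ?_⟩
  intro i hi j _
  have hprefix := Nat.div_two_pow_sub_eq_div_two_pow_sub_one_div_two m hi
  have hchild : h - (i + 1) = h - i - 1 := (Nat.sub_sub h i 1).symm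
  simp only [x, l, r, hprefix, hchild]
  exact branch_tuple_mem R5 h1 h2 h3 h4 _ j
end

section
/- Implementation of equality from a non-mergeable witness: let R ⊆ (Fin r → Bool) and let α, β, γ, δ ∈ R satisfy α ∧ δ ≤ β ≤ α and β ∧ γ ≤ δ ≤ γ, with σ := α ∧ (β ∨ γ) ∉ R. For Booleans a, b define the tuple τ(a,b) : Fin r → Bool by τ(a,b) i = true if β i = true; τ(a,b) i = false if α i = false; τ(a,b) i = a if β i = false and σ i = true; and τ(a,b) i = b if σ i = false and α i = true. Then for all a, b : Bool, (τ(a,b) ∈ R ∧ τ(b,a) ∈ R) holds if and only if a = b; i.e., the conjunction R(τ(x,y)) ∧ R(τ(y,x)) implements the equality constraint (x = y). -/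
/-! On coordinates the three tuples `τ(1,1) = α`, `τ(0,0) = β` and `τ(1,0) = σ` are read off
directly from `β ≤ σ ≤ α`; so both conjuncts hold on the diagonal, while off it one of them
is `σ ∉ R`. -/

/-- The tuple `τ(a,b)` built from a witness `(α, β, σ)` with `β ≤ σ ≤ α`:
true where `β` is true, false where `α` is false, `a` where `β` is false but `σ`
is true, and `b` where `σ` is false but `α` is true. -/
def tau {r : ℕ} (α β σ : Fin r → Bool) (a b : Bool) : Fin r → Bool :=
  fun i =>
    if β i = true then true
    else if α i = false then false
    else if σ i = true then a
    else b

section Tau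

variable {r : ℕ} {α β σ : Fin r → Bool}

theorem tau_true_true (hβα : β ≤ α) : tau α β σ true true = α := by
  funext i
  have := hβα i
  unfold tau
  cases hb : β i <;> cases ha : α i <;> cases hs : σ i <;> simp_all [Bool.le_iff_imp]

theorem tau_false_false (hβα : β ≤ α) : tau α β σ false false = β := by
  funext i
  have := hβα i
  unfold tau
  cases hb : β i <;> cases ha : α i <;> cases hs : σ i <;> simp_all [Bool.le_iff_imp]

theorem tau_true_false (hβσ : β ≤ σ) (hσα : σ ≤ α) : tau α β σ true false = σ := by
  funext i
  have := hβσ i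
  have := hσα i
  unfold tau
  cases hb : β i <;> cases ha : α i <;> cases hs : σ i <;> simp_all [Bool.le_iff_imp]

theorem tau_mem_and_tau_swap_mem_iff {R : Set (Fin r → Bool)} (hβσ : β ≤ σ) (hσα : σ ≤ α)
    (hα : α ∈ R) (hβ : β ∈ R) (hσ : σ ∉ R) (a b : Bool) :
    (tau α β σ a b ∈ R ∧ tau α β σ b a ∈ R) ↔ a = b := by
  have hβα := hβσ.trans hσα
  constructor
  · rintro ⟨hab, hba⟩
    cases a <;> cases b
    · rfl
    · exact absurd (tau_true_false hβσ hσα ▸ hba) hσ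
    · exact absurd (tau_true_false hβσ hσα ▸ hab) hσ
    · rfl
  · rintro rfl
    cases a
    · simp only [tau_false_false hβα, hβ, and_self]
    · simp only [tau_true_true hβα, hα, and_self]

end Tau

theorem stmt_15_general {r : ℕ} (R : Set (Fin r → Bool)) (α β γ : Fin r → Bool)
    (hα : α ∈ R) (hβ : β ∈ R)
    (h2 : ∀ i, β i ≤ α i)
    (hσ : (fun i => α i && (β i || γ i)) ∉ R) :
    ∀ a b : Bool,
      (tau α β (fun i => α i && (β i || γ i)) a b ∈ R ∧
        tau α β (fun i => α i && (β i || γ i)) b a ∈ R) ↔ a = b :=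
  tau_mem_and_tau_swap_mem_iff (σ := α ⊓ (β ⊔ γ)) (le_inf h2 le_sup_left) inf_le_left hα hβ hσ

theorem stmt_15 {r : ℕ} (R : Set (Fin r → Bool)) (α β γ δ : Fin r → Bool)
    (hα : α ∈ R) (hβ : β ∈ R) (hγ : γ ∈ R) (hδ : δ ∈ R)
    (h1 : ∀ i, (α i && δ i) ≤ β i) (h2 : ∀ i, β i ≤ α i)
    (h3 : ∀ i, (β i && γ i) ≤ δ i) (h4 : ∀ i, δ i ≤ γ i)
    (hσ : (fun i => α i && (β i || γ i)) ∉ R) :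
    ∀ a b : Bool,
      (tau α β (fun i => α i && (β i || γ i)) a b ∈ R ∧
        tau α β (fun i => α i && (β i || γ i)) b a ∈ R) ↔ a = b :=
  stmt_15_general R α β γ hα hβ h2 hσ
end

section
/- Witness normal form for non-mergeable relations: let R ⊆ (Fin r → Bool) be a Boolean relation that is not mergeable. Then there exists a map c : Fin r → Fin 7 such that the 7-ary relation R₇ := {t : Fin 7 → Bool | t ∘ c ∈ R} contains the tuples (1,0,1,0,1,1,0), (1,0,1,0,0,0,0), (1,0,0,1,1,0,1), and (1,0,0,1,0,0,0), but does not contain the tuple (1,0,1,0,1,0,0) (writing 1 for true and 0 for false). -/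
theorem stmt_16 {r : ℕ} (R : Set (Fin r → Bool)) (hR : ¬ Mergeable R) :
    ∃ c : Fin r → Fin 7,
      (![true, false, true, false, true, true, false] ∘ c) ∈ R ∧
      (![true, false, true, false, false, false, false] ∘ c) ∈ R ∧
      (![true, false, false, true, true, false, true] ∘ c) ∈ R ∧
      (![true, false, false, true, false, false, false] ∘ c) ∈ R ∧
      (![true, false, true, false, true, false, false] ∘ c) ∉ R := by
  simp only [Mergeable, not_forall] at hR
  obtain ⟨α, hα, β, hβ, γ, hγ, δ, hδ, hMA, hout⟩ := hR
  obtain ⟨h1, h2, h3, h4⟩ := hMA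
  refine ⟨fun i =>
    match α i, β i, γ i, δ i with
    | true, true, true, true => 0
    | false, false, false, false => 1
    | true, true, false, false => 2
    | false, false, true, true => 3
    | true, false, true, false => 4
    | true, false, false, false => 5
    | false, false, true, false => 6
    | _, _, _, _ => 0, ?_, ?_, ?_, ?_, ?_⟩
  · have : (![true, false, true, false, true, true, false] ∘ fun i =>
        match α i, β i, γ i, δ i with
        | true, true, true, true => 0
        | false, false, false, false => 1
        | true, true, false, false => 2
        | false, false, true, true => 3
        | true, false, true, false => 4
        | true, false, false, false => 5
        | false, false, true, false => 6
        | _, _, _, _ => 0) = α := by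
      funext i
      have e1 := h1 i; have e2 := h2 i; have e3 := h3 i; have e4 := h4 i
      simp only [Function.comp]
      rcases hA : α i <;> rcases hB : β i <;> rcases hC : γ i <;> rcases hD : δ i <;>
        simp_all <;> first | rfl | exact absurd ‹(true:Bool) ≤ false› (by decide)
    rwa [this]
  · have : (![true, false, true, false, false, false, false] ∘ fun i =>
        match α i, β i, γ i, δ i with
        | true, true, true, true => 0
        | false, false, false, false => 1
        | true, true, false, false => 2
        | false, false, true, true => 3
        | true, false, true, false => 4
        | true, false, false, false => 5
        | false, false, true, false => 6
        | _, _, _, _ => 0) = β := by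
      funext i
      have e1 := h1 i; have e2 := h2 i; have e3 := h3 i; have e4 := h4 i
      simp only [Function.comp]
      rcases hA : α i <;> rcases hB : β i <;> rcases hC : γ i <;> rcases hD : δ i <;>
        simp_all <;> first | rfl | exact absurd ‹(true:Bool) ≤ false› (by decide)
    rwa [this]
  · have : (![true, false, false, true, true, false, true] ∘ fun i =>
        match α i, β i, γ i, δ i with
        | true, true, true, true => 0
        | false, false, false, false => 1
        | true, true, false, false => 2
        | false, false, true, true => 3
        | true, false, true, false => 4
        | true, false, false, false => 5
        | false, false, true, false => 6
        | _, _, _, _ => 0) = γ := by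
      funext i
      have e1 := h1 i; have e2 := h2 i; have e3 := h3 i; have e4 := h4 i
      simp only [Function.comp]
      rcases hA : α i <;> rcases hB : β i <;> rcases hC : γ i <;> rcases hD : δ i <;>
        simp_all <;> first | rfl | exact absurd ‹(true:Bool) ≤ false› (by decide)
    rwa [this]
  · have : (![true, false, false, true, false, false, false] ∘ fun i =>
        match α i, β i, γ i, δ i with
        | true, true, true, true => 0
        | false, false, false, false => 1
        | true, true, false, false => 2
        | false, false, true, true => 3
        | true, false, true, false => 4
        | true, false, false, false => 5
        | false, false, true, false => 6
        | _, _, _, _ => 0) = δ := by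
      funext i
      have e1 := h1 i; have e2 := h2 i; have e3 := h3 i; have e4 := h4 i
      simp only [Function.comp]
      rcases hA : α i <;> rcases hB : β i <;> rcases hC : γ i <;> rcases hD : δ i <;>
        simp_all <;> first | rfl | exact absurd ‹(true:Bool) ≤ false› (by decide)
    rwa [this]
  · have : (![true, false, true, false, true, false, false] ∘ fun i =>
        match α i, β i, γ i, δ i with
        | true, true, true, true => 0
        | false, false, false, false => 1
        | true, true, false, false => 2
        | false, false, true, true => 3
        | true, false, true, false => 4
        | true, false, false, false => 5
        | false, false, true, false => 6
        | _, _, _, _ => 0) = fun i => α i && (β i || γ i) := by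
      funext i
      have e1 := h1 i; have e2 := h2 i; have e3 := h3 i; have e4 := h4 i
      simp only [Function.comp]
      rcases hA : α i <;> rcases hB : β i <;> rcases hC : γ i <;> rcases hD : δ i <;>
        simp_all <;> first | rfl | exact absurd ‹(true:Bool) ≤ false› (by decide)
    rwa [this]
end

section
/- Let R ⊆ (Fin r → Bool) be a Boolean relation that is not mergeable but is closed under pointwise disjunction (for all α, β ∈ R, α ∨ β ∈ R). Then there exists a map c : Fin r → (Fin 3 ⊕ Bool) such that the ternary relation R' := {t : Fin 3 → Bool | (fun i => Sum.elim t id (c i)) ∈ R} contains (false,false,false), (true,true,false), and (true,false,true), but does not contain (true,false,false). -/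
section MergeGadget

variable {ι : Type*} (α β γ : ι → Bool)

def mergeGadget (i : ι) : Fin 3 ⊕ Bool :=
  if β i then .inr true
  else if α i && γ i then .inl 0
  else if α i then .inl 1
  else if γ i then .inl 2
  else .inr false

theorem mergeGadget_subst_fff :
    (fun i => Sum.elim ![false, false, false] id (mergeGadget α β γ i)) = β := by
  funext i
  unfold mergeGadget
  cases β i <;> cases α i <;> cases γ i <;> simp

theorem mergeGadget_subst_ttf (hβα : β ≤ α) :
    (fun i => Sum.elim ![true, true, false] id (mergeGadget α β γ i)) = α := by
  funext i
  have := hβα i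
  revert this
  unfold mergeGadget
  cases β i <;> cases α i <;> cases γ i <;> simp

theorem mergeGadget_subst_tft :
    (fun i => Sum.elim ![true, false, true] id (mergeGadget α β γ i)) = fun i => β i || γ i := by
  funext i
  unfold mergeGadget
  cases β i <;> cases α i <;> cases γ i <;> simp

theorem mergeGadget_subst_tff (hβα : β ≤ α) :
    (fun i => Sum.elim ![true, false, false] id (mergeGadget α β γ i)) =
      fun i => α i && (β i || γ i) := by
  funext i
  have := hβα i
  revert this
  unfold mergeGadget
  cases β i <;> cases α i <;> cases γ i <;> simp

end MergeGadget

theorem stmt_17 {r : ℕ} (R : Set (Fin r → Bool)) (hR : ¬ Mergeable R)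
    (hor : ∀ α ∈ R, ∀ β ∈ R, (fun i => α i || β i) ∈ R) :
    ∃ c : Fin r → (Fin 3 ⊕ Bool),
      ((fun i => Sum.elim ![false, false, false] id (c i)) ∈ R) ∧
      ((fun i => Sum.elim ![true, true, false] id (c i)) ∈ R) ∧
      ((fun i => Sum.elim ![true, false, true] id (c i)) ∈ R) ∧
      ((fun i => Sum.elim ![true, false, false] id (c i)) ∉ R) := by
  simp only [Mergeable, not_forall] at hR
  obtain ⟨α, hα, β, hβ, γ, hγ, δ, -, happ, hmerge⟩ := hR
  have hβα : β ≤ α := happ.2.1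
  refine ⟨mergeGadget α β γ, ?_, ?_, ?_, ?_⟩
  · rwa [mergeGadget_subst_fff]
  · rwa [mergeGadget_subst_ttf α β γ hβα]
  · rw [mergeGadget_subst_tft]
    exact hor β hβ γ hγ
  · rwa [mergeGadget_subst_tff α β γ hβα]
end

section
/- Let R ⊆ (Fin r → Bool) be a nonempty Boolean relation that contains neither the all-false tuple nor the all-true tuple. Then there exists a map f : Fin r → Fin 2 such that the induced binary relation R₂ := {(a, b) : Bool × Bool | (fun i => if f i = 0 then a else b) ∈ R} contains (true, false) but contains neither (false, false) nor (true, true); consequently R₂ is either {(true,false)} or {(true,false),(false,true)}, i.e., the identification of variables yields either the constraint (x = 1 ∧ y = 0) or the disequality constraint (x ≠ y). -/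
/-! Pick any tuple `g ∈ R` and send the positions where `g` is true to the first variable and
the others to the second: the identified pair `(true, false)` then recovers `g`, while `(a, a)`
gives a constant tuple, which is excluded by hypothesis. -/

section IdentifyVars

variable {ι : Type*}

def identifyVars (f : ι → Fin 2) (a b : Bool) : ι → Bool :=
  fun i => if f i = 0 then a else b

theorem identifyVars_self (f : ι → Fin 2) (a : Bool) : identifyVars f a a = fun _ => a :=
  funext fun _ => ite_self a

theorem identifyVars_true_false (g : ι → Bool) :
    identifyVars (fun i => if g i then 0 else 1) true false = g := by
  funext i
  cases h : g i <;> simp [identifyVars, h]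

end IdentifyVars

theorem Bool.set_eq_singleton_or_pair_of_diag_notMem {S : Set (Bool × Bool)}
    (htf : (true, false) ∈ S) (hff : (false, false) ∉ S) (htt : (true, true) ∉ S) :
    S = {(true, false)} ∨ S = {(true, false), (false, true)} := by
  by_cases hft : (false, true) ∈ S
  · right
    ext ⟨a, b⟩
    cases a <;> cases b <;> simp_all
  · left
    ext ⟨a, b⟩
    cases a <;> cases b <;> simp_all

theorem stmt_18 {r : ℕ} (R : Set (Fin r → Bool)) (hne : R.Nonempty)
    (h0 : (fun _ => false : Fin r → Bool) ∉ R)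
    (h1 : (fun _ => true : Fin r → Bool) ∉ R) :
    ∃ f : Fin r → Fin 2,
      ∀ R2 : Set (Bool × Bool),
        R2 = {ab : Bool × Bool | (fun i => if f i = 0 then ab.1 else ab.2) ∈ R} →
        ((true, false) ∈ R2 ∧ (false, false) ∉ R2 ∧ (true, true) ∉ R2 ∧
          (R2 = {(true, false)} ∨ R2 = {(true, false), (false, true)})) := by
  obtain ⟨g, hg⟩ := hne
  set f : Fin r → Fin 2 := fun i => if g i then 0 else 1
  refine ⟨f, ?_⟩
  rintro R2 rfl
  have htf : identifyVars f true false ∈ R := (identifyVars_true_false g).symm ▸ hg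
  have hff : identifyVars f false false ∉ R := identifyVars_self f false ▸ h0
  have htt : identifyVars f true true ∉ R := identifyVars_self f true ▸ h1
  exact ⟨htf, hff, htt, Bool.set_eq_singleton_or_pair_of_diag_notMem htf hff htt⟩
end
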